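/- arXiv:2007.05473 — 6 statements merged into one kernel-verified Lean document; each statement's English description precedes it below -/
import Mathlib

section
/- Let p be an odd prime and r a positive integer, and let ζ = ζ_{p^r} be a primitive p^r-th root of unity. Then the set S ∪ S̄, where S = {ζ^j : 1 ≤ j ≤ p^{r-1}(p-1)/2} and S̄ = {ζ^j : p^{r-1}(p+1)/2 ≤ j ≤ p^r - 1}, is a Z-basis of the ring of integers Z[ζ] of Q(ζ). -/
/-!
Write `p = 2m + 1` and `q = p^(r-1)`, so that the exponents of `S ∪ S̄` are those in
`[1, qm] ∪ [qm + q, qp - 1]`. Since `ζ^q` is a primitive `p`-th root of unity,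
`∑_{i<p} ζ^(t + qi) = 0` for every `t`, so each `ζ^(t + qk)` lies in the `ℤ`-span of the other
`ζ^(t + qi)`. The exponent set omits exactly one element of each residue class `t + qℤ` in
`[0, qp)` (namely `0` for `t = 0` and `t + qm` for `0 < t < q`), so its span contains every
power of `ζ`, hence all of `𝓞 K = ℤ[ζ]`. Finally it has `q(p - 1) = φ(p^r)` elements, the rank
of `𝓞 K`, and a spanning family of that size in a free `ℤ`-module of finite rank is a basis.
-/

open NumberField Finset

def MissesAtMostOnePerResidue (q p : ℕ) (J : ℕ → Prop) : Prop :=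
  ∀ t < q, ∃ k < p, ∀ i < p, i ≠ k → J (t + q * i)

theorem MissesAtMostOnePerResidue.mono {q p : ℕ} {J J' : ℕ → Prop}
    (hJ : MissesAtMostOnePerResidue q p J) (hJJ' : ∀ j, J j → J' j) :
    MissesAtMostOnePerResidue q p J' := fun t ht =>
  let ⟨k, hk, hJk⟩ := hJ t ht
  ⟨k, hk, fun i hi hik => hJJ' _ (hJk i hi hik)⟩

theorem missesAtMostOnePerResidue_Icc_union_Icc (q m : ℕ) :
    MissesAtMostOnePerResidue q (2 * m + 1)
      fun j => (1 ≤ j ∧ j ≤ q * m) ∨ (q * m + q ≤ j ∧ j ≤ q * (2 * m + 1) - 1) := by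
  intro t ht
  refine ⟨if t = 0 then 0 else m, by split_ifs <;> omega, fun i hi hik => ?_⟩
  have hq : q * (2 * m + 1) = 2 * (q * m) + q := by ring
  rcases lt_or_ge m i with him | him
  · have h1 : q * (m + 1) ≤ q * i := Nat.mul_le_mul_left q him
    have h2 : q * i ≤ q * (2 * m) := Nat.mul_le_mul_left q (by omega)
    grind
  · have h1 : q * (i + 1) ≤ q * m ∨ i = m := by
      rcases him.lt_or_eq with h | h
      · exact .inl (Nat.mul_le_mul_left q h)
      · exact .inr h
    have h2 : q ≤ q * i ∨ i = 0 := by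
      rcases i with _ | i
      · exact .inr rfl
      · exact .inl (Nat.le_mul_of_pos_right q (by omega))
    split_ifs at hik <;> grind

theorem card_Icc_union_Icc {q : ℕ} (hq : 0 < q) (m : ℕ) :
    Nat.card {j // (1 ≤ j ∧ j ≤ q * m) ∨ (q * m + q ≤ j ∧ j ≤ q * (2 * m + 1) - 1)} =
      q * (2 * m) := by
  have hdisj : Disjoint (Icc 1 (q * m)) (Icc (q * m + q) (q * (2 * m + 1) - 1)) :=
    disjoint_left.2 fun j h1 h2 => by grind
  calc _ = Nat.card ↥(Icc 1 (q * m) ∪ Icc (q * m + q) (q * (2 * m + 1) - 1)) :=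
        Nat.card_congr (Equiv.subtypeEquivRight fun j => by simp)
    _ = q * (2 * m) := by
      rw [Nat.card_eq_finsetCard, card_union_of_disjoint hdisj, Nat.card_Icc, Nat.card_Icc]
      have : q * (2 * m + 1) = 2 * (q * m) + q := by ring
      grind

section GeomSum

variable {R : Type*} [CommRing R] {ζ : R} {q p : ℕ}

theorem pow_add_mul_mem_of_geom_sum_eq_zero (hgeom : ∑ i ∈ range p, (ζ ^ q) ^ i = 0)
    {M : Submodule ℤ R} {t k : ℕ} (hk : k < p) (hM : ∀ i < p, i ≠ k → ζ ^ (t + q * i) ∈ M) :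
    ζ ^ (t + q * k) ∈ M := by
  have hsum : ∑ i ∈ range p, ζ ^ (t + q * i) = 0 := by
    simp only [pow_add, pow_mul, ← mul_sum, hgeom, mul_zero]
  rw [← sum_erase_add _ _ (mem_range.2 hk), add_eq_zero_iff_eq_neg'] at hsum
  rw [hsum]
  refine M.neg_mem (M.sum_mem fun i hi => ?_)
  obtain ⟨hik, hi⟩ := mem_erase.1 hi
  exact hM i (mem_range.1 hi) hik

theorem pow_mem_of_missesAtMostOnePerResidue (hgeom : ∑ i ∈ range p, (ζ ^ q) ^ i = 0)
    {J : ℕ → Prop} (hJ : MissesAtMostOnePerResidue q p J) {M : Submodule ℤ R}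
    (hM : ∀ j, J j → ζ ^ j ∈ M) {n : ℕ} (hn : n < q * p) : ζ ^ n ∈ M := by
  have hq : 0 < q := Nat.pos_of_mul_pos_right (n.zero_le.trans_lt hn)
  obtain ⟨k, hk, hJk⟩ := hJ (n % q) (Nat.mod_lt _ hq)
  have hmem : ∀ i < p, i ≠ k → ζ ^ (n % q + q * i) ∈ M := fun i hi hik => hM _ (hJk i hi hik)
  rw [← Nat.mod_add_div n q]
  by_cases h : n / q = k
  · rw [h]
    exact pow_add_mul_mem_of_geom_sum_eq_zero hgeom hk hmem
  · exact hmem _ (Nat.div_lt_of_lt_mul hn) h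

end GeomSum

namespace IsPrimitiveRoot

variable {n : ℕ} [NeZero n] {K : Type*} [Field K] [CharZero K] [IsCyclotomicExtension {n} ℚ K]
  {ζ : 𝓞 K}

theorem span_range_pow_eq_top (hζ : IsPrimitiveRoot ζ n) :
    Submodule.span ℤ (Set.range (ζ ^ · : ℕ → 𝓞 K)) = ⊤ := by
  let b := (hζ.map_of_injective RingOfIntegers.coe_injective).integralPowerBasis
  rw [eq_top_iff, ← b.basis.span_eq]
  refine Submodule.span_mono ?_
  rintro _ ⟨i, rfl⟩
  exact ⟨i, by simp [b, b.basis_eq_pow]⟩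

theorem finrank_ringOfIntegers (hζ : IsPrimitiveRoot ζ n) :
    Module.finrank ℤ (𝓞 K) = n.totient := by
  simp [(hζ.map_of_injective RingOfIntegers.coe_injective).integralPowerBasis.finrank]

theorem span_pow_eq_top_of_missesAtMostOnePerResidue (hζ : IsPrimitiveRoot ζ n) {q p : ℕ}
    (hqp : n = q * p) (hp : 1 < p) {J : ℕ → Prop} (hJ : MissesAtMostOnePerResidue q p J) :
    Submodule.span ℤ (Set.range fun j : {j // J j} => ζ ^ (j : ℕ)) = ⊤ := by
  have hgeom := (hζ.pow (NeZero.pos n) hqp).geom_sum_eq_zero hp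
  rw [eq_top_iff, ← hζ.span_range_pow_eq_top, Submodule.span_le]
  rintro _ ⟨i, rfl⟩
  dsimp only
  rw [← pow_mod_orderOf, ← hζ.eq_orderOf]
  refine pow_mem_of_missesAtMostOnePerResidue hgeom hJ
    (fun j hj => Submodule.subset_span (Set.mem_range_self (⟨j, hj⟩ : {j // J j}))) ?_
  exact hqp ▸ Nat.mod_lt _ (NeZero.pos n)

theorem linearIndependent_pow_of_missesAtMostOnePerResidue (hζ : IsPrimitiveRoot ζ n)
    {q p : ℕ} (hqp : n = q * p) (hp : 1 < p) {J : ℕ → Prop}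
    (hJ : MissesAtMostOnePerResidue q p J) (hcard : Nat.card {j // J j} = n.totient) :
    LinearIndependent ℤ fun j : {j // J j} => ζ ^ (j : ℕ) := by
  have : Fintype {j // J j} :=
    have := Nat.finite_of_card_ne_zero (hcard ▸ (Nat.totient_pos.2 (NeZero.pos n)).ne')
    Fintype.ofFinite _
  refine linearIndependent_of_top_le_span_of_card_eq_finrank
    (hζ.span_pow_eq_top_of_missesAtMostOnePerResidue hqp hp hJ).ge ?_
  rw [← Nat.card_eq_fintype_card, hcard, hζ.finrank_ringOfIntegers]

end IsPrimitiveRoot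

/-- Let `p` be an odd prime, `r ≥ 1` and `ζ` a primitive `p^r`-th root of unity.  Then
`{ζ^j : 1 ≤ j ≤ p^{r-1}(p-1)/2} ∪ {ζ^j : p^{r-1}(p+1)/2 ≤ j ≤ p^r - 1}` is a `ℤ`-basis
of the ring of integers `ℤ[ζ]` of `ℚ(ζ)`. -/
theorem stmt2 (p r : ℕ) (hp : p.Prime) (hodd : Odd p) (hr : 1 ≤ r)
    (ζ : 𝓞 (CyclotomicField (p ^ r) ℚ))
    (hζ : IsPrimitiveRoot ζ (p ^ r)) :
    LinearIndependent ℤ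
      (fun j : {j : ℕ // (1 ≤ j ∧ j ≤ p ^ (r - 1) * (p - 1) / 2) ∨
          (p ^ (r - 1) * (p + 1) / 2 ≤ j ∧ j ≤ p ^ r - 1)} => ζ ^ (j : ℕ)) ∧
    Submodule.span ℤ
      (Set.range (fun j : {j : ℕ // (1 ≤ j ∧ j ≤ p ^ (r - 1) * (p - 1) / 2) ∨
          (p ^ (r - 1) * (p + 1) / 2 ≤ j ∧ j ≤ p ^ r - 1)} => ζ ^ (j : ℕ))) = ⊤ := by
  obtain ⟨m, rfl⟩ := hodd
  -- Instance search picks `DivisionRing.toRatAlgebra` for `Algebra ℚ (CyclotomicField _ ℚ)`,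
  -- which the library instance does not match up to reducible defeq.
  have : IsCyclotomicExtension {(2 * m + 1) ^ r} ℚ (CyclotomicField ((2 * m + 1) ^ r) ℚ) :=
    CyclotomicField.isCyclotomicExtension _ _
  set q := (2 * m + 1) ^ (r - 1)
  have hpr : (2 * m + 1) ^ r = q * (2 * m + 1) := (pow_sub_one_mul (by omega) _).symm
  have hJ : ∀ j, ((1 ≤ j ∧ j ≤ q * m) ∨ (q * m + q ≤ j ∧ j ≤ q * (2 * m + 1) - 1)) ↔
      ((1 ≤ j ∧ j ≤ q * (2 * m + 1 - 1) / 2) ∨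
        (q * (2 * m + 1 + 1) / 2 ≤ j ∧ j ≤ (2 * m + 1) ^ r - 1)) := by
    have h1 : q * (2 * m + 1 - 1) / 2 = q * m := by
      rw [Nat.add_sub_cancel, mul_left_comm, Nat.mul_div_cancel_left _ two_pos]
    have h2 : q * (2 * m + 1 + 1) / 2 = q * m + q := by
      rw [show q * (2 * m + 1 + 1) = 2 * (q * m + q) by ring, Nat.mul_div_cancel_left _ two_pos]
    simp only [h1, h2, hpr, implies_true]
  have hmisses := (missesAtMostOnePerResidue_Icc_union_Icc q m).mono fun j => (hJ j).1
  refine ⟨hζ.linearIndependent_pow_of_missesAtMostOnePerResidue hpr hp.one_lt hmisses ?_,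
    hζ.span_pow_eq_top_of_missesAtMostOnePerResidue hpr hp.one_lt hmisses⟩
  rw [← Nat.card_congr (Equiv.subtypeEquivRight hJ), card_Icc_union_Icc (by positivity),
    Nat.totient_prime_pow hp (by omega), Nat.add_sub_cancel]
end

section
/- Let n ≥ 3 be an integer which is not a power of 2, let K = Q(ζ_n) with ring of integers O_K, and let ι denote complex conjugation acting on O_K. Then both Tate cohomology groups Ĥ^0(Z/2, O_K) = O_K^ι / (1+ι)O_K and H^1(Z/2, O_K) = {x ∈ O_K : ι(x) = -x} / (1-ι)O_K vanish. -/
/-! An element `e` with `e + σ e = 1` kills both groups: `x = x e + σ (x e)` when `σ x = x`,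
and `x = x e - σ (x e)` when `σ x = -x`. Since `n` is not a power of `2`, a power of `ζ` is a
primitive root `ξ` of odd order `m > 1`, and half of the relation `1 + ξ + ⋯ + ξ^(m-1) = 0`
yields such an `e`. -/

open NumberField Finset

section TraceOne

variable {R F : Type*} [CommRing R] [FunLike F R R] [RingHomClass F R R]

theorem map_pow_eq_pow_sub_of_map_mul_self_eq_one {σ : F} {ξ : R} {m j : ℕ}
    (hσ : σ ξ * ξ = 1) (hξ : ξ ^ m = 1) (hj : j ≤ m) : σ (ξ ^ j) = ξ ^ (m - j) :=
  left_inv_eq_right_inv (a := ξ ^ j)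
    (by rw [map_pow, ← mul_pow, hσ, one_pow])
    (by rw [← pow_add, Nat.add_sub_cancel' hj, hξ])

/-- For `m = 2k + 1` the element `e = 1 + ξ + ⋯ + ξ^k` works: `σ` maps `ξ, …, ξ^k` to
`ξ^(2k), …, ξ^(k+1)`, so `e + σ e = 1 + ∑_{j ≤ 2k} ξ^j = 1`. -/
theorem exists_add_map_eq_one_of_isPrimitiveRoot [IsDomain R] {σ : F} {ξ : R} {m : ℕ}
    (hξ : IsPrimitiveRoot ξ m) (hm : Odd m) (hm1 : 1 < m) (hσ : σ ξ * ξ = 1) :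
    ∃ e : R, e + σ e = 1 := by
  obtain ⟨k, rfl⟩ := hm
  refine ⟨∑ j ∈ range (k + 1), ξ ^ j, ?_⟩
  have hσsum : σ (∑ j ∈ range k, ξ ^ (j + 1)) = ∑ j ∈ range k, ξ ^ (k + 1 + j) := by
    rw [map_sum, ← sum_range_reflect _ k]
    refine sum_congr rfl fun j hj => ?_
    rw [map_pow_eq_pow_sub_of_map_mul_self_eq_one hσ hξ.pow_eq_one (by grind)]
    congr 1
    grind
  have hgeom := hξ.geom_sum_eq_zero hm1
  rw [show 2 * k + 1 = (k + 1) + k by ring, sum_range_add, sum_range_succ'] at hgeom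
  rw [sum_range_succ', map_add, hσsum, pow_zero, map_one]
  linear_combination hgeom

end TraceOne

section TateCohomology

variable {R F : Type*} [CommRing R] [FunLike F R R] [RingHomClass F R R] {σ : F} {e : R}

theorem exists_eq_add_map_of_map_eq_self (he : e + σ e = 1) {x : R} (hx : σ x = x) :
    ∃ y : R, x = y + σ y :=
  ⟨x * e, by rw [map_mul, hx]; linear_combination -x * he⟩

theorem exists_eq_sub_map_of_map_eq_neg (he : e + σ e = 1) {x : R} (hx : σ x = -x) :
    ∃ y : R, x = y - σ y :=
  ⟨x * e, by rw [map_mul, hx]; linear_combination -x * he⟩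

end TateCohomology

theorem stmt4_general (n : ℕ) (hn0 : 0 < n) (hpow : ¬ ∃ k, n = 2 ^ k)
    (K : Type*) [Field K]
    (ζ : 𝓞 K) (hζ : IsPrimitiveRoot ζ n)
    (σ : 𝓞 K ≃+* 𝓞 K) (hσ : σ ζ * ζ = 1) :
    (∀ x : 𝓞 K, σ x = x → ∃ y : 𝓞 K, x = y + σ y) ∧
    (∀ x : 𝓞 K, σ x = -x → ∃ y : 𝓞 K, x = y - σ y) := by
  obtain ⟨v, m, hm, rfl⟩ := Nat.exists_eq_two_pow_mul_odd hn0.ne'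
  have hm1 : 1 < m := by
    rcases Nat.lt_or_ge 1 m with h | h
    · exact h
    · obtain rfl : m = 1 := by have := hm.pos; omega
      exact absurd ⟨v, mul_one _⟩ hpow
  have hξ : IsPrimitiveRoot (ζ ^ 2 ^ v) m := hζ.pow hn0 rfl
  have hσξ : σ (ζ ^ 2 ^ v) * ζ ^ 2 ^ v = 1 := by rw [map_pow, ← mul_pow, hσ, one_pow]
  obtain ⟨e, he⟩ := exists_add_map_eq_one_of_isPrimitiveRoot hξ hm hm1 hσξ
  exact ⟨fun _ => exists_eq_add_map_of_map_eq_self he, fun _ => exists_eq_sub_map_of_map_eq_neg he⟩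

/-- Let `n ≥ 3` not be a power of `2`, `K = ℚ(ζ_n)` and `ι = σ` the complex conjugation
on `𝓞 K` (the ring automorphism with `σ ζ = ζ⁻¹`).  Then the Tate cohomology groups
`Ĥ⁰(ℤ/2, 𝓞 K) = 𝓞 K^σ/(1+σ)𝓞 K` and `H¹(ℤ/2, 𝓞 K) = {x : σ x = -x}/(1-σ)𝓞 K` vanish. -/
theorem stmt4 (n : ℕ) (hn0 : 0 < n) (hn : 3 ≤ n) (hpow : ¬ ∃ k, n = 2 ^ k)
    (K : Type*) [Field K] [NumberField K]
    [IsCyclotomicExtension {n} ℚ K]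
    (ζ : 𝓞 K) (hζ : IsPrimitiveRoot ζ n)
    (σ : 𝓞 K ≃+* 𝓞 K) (hσ : σ ζ * ζ = 1) :
    (∀ x : 𝓞 K, σ x = x → ∃ y : 𝓞 K, x = y + σ y) ∧
    (∀ x : 𝓞 K, σ x = -x → ∃ y : 𝓞 K, x = y - σ y) :=
  stmt4_general n hn0 hpow K ζ hζ σ hσ
end

section
/- Let m ≥ 2 and K = Q(ζ_{2^m}) with ring of integers O_K = Z[ζ_{2^m}], and let ι denote complex conjugation. Then the Tate cohomology group Ĥ^0(Z/2, O_K) = O_K^ι/(1+ι)O_K is isomorphic to Z/2, generated by the class of 1. -/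
/-!
The powers `1, ζ, …, ζ^(n-1)`, `n = 2^(m-1)`, form a `ℤ`-basis of `𝓞 K`, and since `ζ^n = -1`
the conjugation sends `ζ^i` to `-ζ^(n-i)` for `0 < i < n`: it fixes the first basis vector and
permutes the others up to sign along `i ↦ -i` in `ZMod n`. The coefficient of `1` in `y + σ y` is
twice that of `y`, which rules out `1`. A fixed `x = ∑ cᵢ ζ^i` has `cᵢ = -c₋ᵢ` for `i ≠ 0`, so
`x - c₀ = y + σ y` with `y = ∑_{i < -i} cᵢ ζ^i`, and `c₀` is even or odd.
-/

open NumberField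

theorem IsPrimitiveRoot.pow_eq_neg_one_of_two_mul {R : Type*} [CommRing R] [NoZeroDivisors R]
    {ζ : R} {k : ℕ} (hk : k ≠ 0) (hζ : IsPrimitiveRoot ζ (2 * k)) : ζ ^ k = -1 := by
  have h2 := hζ.pow_of_dvd hk (dvd_mul_left k 2)
  rw [Nat.mul_div_cancel _ (Nat.pos_of_ne_zero hk)] at h2
  exact h2.eq_neg_one_of_two_right

theorem map_pow_eq_neg_pow_sub {R F : Type*} [CommRing R] [FunLike F R R] [MonoidHomClass F R R]
    {σ : F} {ζ : R} {n i : ℕ} (hσ : σ ζ * ζ = 1) (hn : ζ ^ n = -1) (hi : i ≤ n) :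
    σ (ζ ^ i) = -ζ ^ (n - i) := by
  have hunit : IsUnit (ζ ^ i) := (IsUnit.of_mul_eq_one_right _ hσ).pow i
  refine hunit.mul_left_inj.mp ?_
  rw [map_pow, ← mul_pow, hσ, one_pow, neg_mul, ← pow_add, Nat.sub_add_cancel hi, hn, neg_neg]

theorem IsPrimitiveRoot.exists_powerBasis_int {K : Type*} [Field K] [NumberField K] {n : ℕ}
    [NeZero n] [IsCyclotomicExtension {n} ℚ K] {ζ : 𝓞 K} (hζ : IsPrimitiveRoot ζ n) :
    ∃ B : PowerBasis ℤ (𝓞 K), B.gen = ζ ∧ B.dim = n.totient := by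
  have hζK := hζ.map_of_injective (f := algebraMap (𝓞 K) K) RingOfIntegers.coe_injective
  exact ⟨hζK.integralPowerBasis, by simp, hζK.integralPowerBasis_dim⟩

section SignedReflection

variable {M F : Type*} [AddCommGroup M] {n : ℕ} [NeZero n] (b : Module.Basis (Fin n) ℤ M)
  [FunLike F M M] [AddMonoidHomClass F M M] {σ : F}

theorem Module.Basis.repr_map_of_map_eq_neg (hσ₀ : σ (b 0) = b 0)
    (hσ : ∀ i ≠ 0, σ (b i) = -b (-i)) (x : M) (j : Fin n) :
    b.repr (σ x) j = if j = 0 then b.repr x 0 else -b.repr x (-j) := by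
  let σℤ : M →ₗ[ℤ] M := (σ : M →+ M).toIntLinearMap
  suffices (b.coord j) ∘ₗ σℤ = if j = 0 then b.coord 0 else -b.coord (-j) by
    have := LinearMap.congr_fun this x
    split_ifs at this ⊢ <;> simpa [σℤ] using this
  refine b.ext fun i => ?_
  by_cases hi : i = 0
  · subst hi
    split_ifs with hj <;> simp [σℤ, hσ₀, hj]
  · split_ifs with hj
    · subst hj
      simp [σℤ, hσ i hi, hi]
    · simp [σℤ, hσ i hi, Finsupp.single_apply, neg_eq_iff_eq_neg]

theorem Module.Basis.not_exists_basis_zero_eq_add_map (hσ₀ : σ (b 0) = b 0)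
    (hσ : ∀ i ≠ 0, σ (b i) = -b (-i)) : ¬ ∃ y, b 0 = y + σ y := by
  rintro ⟨y, hy⟩
  have := congr_arg (b.repr · 0) hy
  simp only [b.repr_self, Finsupp.single_eq_same, map_add, Finsupp.add_apply,
    b.repr_map_of_map_eq_neg hσ₀ hσ, if_true] at this
  omega

theorem Module.Basis.exists_eq_emod_two_smul_add_of_map_eq (hσ₀ : σ (b 0) = b 0)
    (hσ : ∀ i ≠ 0, σ (b i) = -b (-i)) {x : M} (hx : σ x = x) :
    ∃ y, x = (b.repr x 0 % 2) • b 0 + (y + σ y) := by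
  set c := b.repr x with hcx
  have hc : ∀ j ≠ 0, c j = -c (-j) := fun j hj => by
    simpa [hj, hx] using b.repr_map_of_map_eq_neg hσ₀ hσ x j
  let g : Fin n → ℤ := fun j => if j = 0 then c 0 / 2 else if j < -j then c j else 0
  have hg : ∀ j, b.repr (b.equivFun.symm g) j = g j := fun j => by
    rw [← b.equivFun_apply, LinearEquiv.apply_symm_apply]
  refine ⟨b.equivFun.symm g, b.ext_elem fun j => ?_⟩
  simp only [map_add, map_zsmul, Finsupp.add_apply, Finsupp.smul_apply,
    b.repr_map_of_map_eq_neg hσ₀ hσ, b.repr_self, hg, Finsupp.single_apply, smul_eq_mul, ← hcx]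
  by_cases hj : j = 0
  · subst hj
    simp only [↓reduceIte, mul_one, g]
    omega
  · have hj' : -j ≠ 0 := neg_ne_zero.mpr hj
    rcases lt_trichotomy j (-j) with hlt | heq | hgt
    · simp [g, hj, Ne.symm hj, hj', hlt, hlt.not_gt]
    · have : c j = 0 := by have := hc j hj; rw [← heq] at this; omega
      simp [g, hj, Ne.symm hj, ← heq, this]
    · simp [g, hj, Ne.symm hj, hj', hgt, hgt.not_gt, hc j hj]

theorem Module.Basis.exists_eq_add_map_or_of_map_eq (hσ₀ : σ (b 0) = b 0)
    (hσ : ∀ i ≠ 0, σ (b i) = -b (-i)) {x : M} (hx : σ x = x) :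
    (∃ y, x = y + σ y) ∨ ∃ y, x = b 0 + (y + σ y) := by
  obtain ⟨y, hy⟩ := b.exists_eq_emod_two_smul_add_of_map_eq hσ₀ hσ hx
  rcases Int.emod_two_eq_zero_or_one (b.repr x 0) with h | h
  · exact .inl ⟨y, by simpa [h] using hy⟩
  · exact .inr ⟨y, by simpa [h] using hy⟩

end SignedReflection

/-- Let `m ≥ 2`, `K = ℚ(ζ_{2^m})` and `σ` the complex conjugation on `𝓞 K = ℤ[ζ_{2^m}]`.
Then the Tate cohomology group `Ĥ⁰(ℤ/2, 𝓞 K) = 𝓞 K^σ/(1+σ)𝓞 K` is isomorphic to `ℤ/2`,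
generated by the class of `1`: the class of `1` is nonzero, and every `σ`-fixed element
is congruent to `0` or to `1` modulo `(1+σ)𝓞 K`. -/
theorem stmt5 (m : ℕ) (hm : 2 ≤ m)
    (K : Type*) [Field K] [NumberField K]
    [IsCyclotomicExtension {2 ^ m} ℚ K]
    (ζ : 𝓞 K) (hζ : IsPrimitiveRoot ζ (2 ^ m))
    (σ : 𝓞 K ≃+* 𝓞 K) (hσ : σ ζ * ζ = 1) :
    (¬ ∃ y : 𝓞 K, (1 : 𝓞 K) = y + σ y) ∧
    (∀ x : 𝓞 K, σ x = x → (∃ y : 𝓞 K, x = y + σ y) ∨ (∃ y : 𝓞 K, x = 1 + (y + σ y))) := by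
  obtain ⟨B, hgen, htot⟩ := hζ.exists_powerBasis_int
  have hdim : B.dim = 2 ^ (m - 1) := by
    rw [htot, Nat.totient_prime_pow Nat.prime_two (by omega)]
    simp
  have : NeZero B.dim := ⟨by rw [hdim]; positivity⟩
  have hneg : ζ ^ B.dim = -1 := by
    refine IsPrimitiveRoot.pow_eq_neg_one_of_two_mul (NeZero.ne _) ?_
    rwa [hdim, ← pow_succ', Nat.sub_add_cancel (by omega)]
  have hb : ∀ i, B.basis i = ζ ^ (i : ℕ) := by simp [hgen]
  have hσ₀ : σ (B.basis 0) = B.basis 0 := by simp [hb]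
  have hσi : ∀ i ≠ 0, σ (B.basis i) = -B.basis (-i) := fun i hi => by
    rw [hb, hb, Fin.val_neg, if_neg hi]
    exact map_pow_eq_neg_pow_sub hσ hneg i.is_lt.le
  have hone : B.basis 0 = 1 := by simp [hb]
  exact ⟨hone ▸ B.basis.not_exists_basis_zero_eq_add_map hσ₀ hσi,
    fun x hx => hone ▸ B.basis.exists_eq_add_map_or_of_map_eq hσ₀ hσi hx⟩
end

section
/- In Q_2(√5), the element -15 + 4√5 is a square. Consequently, Q_2(√5)(√(-30 + 8√5)) = Q_2(√5, √2), which is a biquadratic extension of Q_2. -/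
/-! If `a ∈ ℚ₂` is a root of `f = 4X⁴ + 15X² + 5`, then
`(2a + √5/a)² = 4a² + 5/a² + 4√5 = -15 + 4√5`; such a root exists by Hensel's lemma, since
`f(1) = 24` is divisible by `8` while `f'(1) = 46` is divisible by `2` only once.
Given `t² = -30 + 8√5 = 2z²` with `z` in `ℚ₂(√5)`, `w = t/z` is a square root of `2` and
`t = wz`, so `{√5, t}` and `{√5, w}` generate the same algebra. As `5` (not a square mod `8`),
`2` and `10` (of odd valuation) are non-squares in `ℚ₂`, both steps of
`ℚ₂ ⊂ ℚ₂(√5) ⊂ ℚ₂(√5, √2)` have degree `2`. -/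

open Polynomial IntermediateField

section Biquadratic

variable {F K : Type*} [Field F] [Field K] [Algebra F K]

lemma exists_eq_add_mul_of_mem_adjoin_of_sq_eq {s y : K} {d : F} (hs : s ^ 2 = algebraMap F K d)
    (hy : y ∈ Algebra.adjoin F {s}) : ∃ a b : F, y = algebraMap F K a + algebraMap F K b * s := by
  induction hy using Algebra.adjoin_induction with
  | mem x hx => exact ⟨0, 1, by simp [Set.mem_singleton_iff.1 hx]⟩
  | algebraMap r => exact ⟨r, 0, by simp⟩
  | add x y _ _ hx hy =>
    obtain ⟨a, b, rfl⟩ := hx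
    obtain ⟨a', b', rfl⟩ := hy
    exact ⟨a + a', b + b', by simp only [map_add]; ring⟩
  | mul x y _ _ hx hy =>
    obtain ⟨a, b, rfl⟩ := hx
    obtain ⟨a', b', rfl⟩ := hy
    refine ⟨a * a' + d * b * b', a * b' + b * a', ?_⟩
    simp only [map_add, map_mul]
    linear_combination algebraMap F K b * algebraMap F K b' * hs

lemma eq_zero_and_eq_zero_of_algebraMap_add_mul_eq_zero {d : F} (hd : ∀ x : F, x ^ 2 ≠ d) {s : K}
    (hs : s ^ 2 = algebraMap F K d) {u v : F} (h : algebraMap F K u + algebraMap F K v * s = 0) :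
    u = 0 ∧ v = 0 := by
  have hv : v = 0 := by
    by_contra hv
    refine hd (-u / v) (FaithfulSMul.algebraMap_injective F K ?_)
    have hv' : algebraMap F K v ≠ 0 := (_root_.map_ne_zero _).2 hv
    rw [← hs, map_pow, map_div₀, map_neg, eq_neg_of_add_eq_zero_left h]
    field_simp
  subst hv
  exact ⟨(map_eq_zero_iff _ (algebraMap F K).injective).1 (by simpa using h), rfl⟩

lemma sq_ne_algebraMap_of_mem_adjoin [NeZero (2 : F)] {d e : F} (hd : ∀ x : F, x ^ 2 ≠ d)
    (he : ∀ x : F, x ^ 2 ≠ e) (hde : ∀ x : F, x ^ 2 ≠ d * e) {s y : K}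
    (hs : s ^ 2 = algebraMap F K d) (hy : y ∈ Algebra.adjoin F {s}) :
    y ^ 2 ≠ algebraMap F K e := by
  obtain ⟨a, b, rfl⟩ := exists_eq_add_mul_of_mem_adjoin_of_sq_eq hs hy
  intro h
  have key : algebraMap F K (a ^ 2 + d * b ^ 2 - e) + algebraMap F K (2 * a * b) * s = 0 := by
    simp only [map_add, map_sub, map_mul, map_pow, map_ofNat]
    linear_combination h - algebraMap F K b ^ 2 * hs
  obtain ⟨hsum, hprod⟩ := eq_zero_and_eq_zero_of_algebraMap_add_mul_eq_zero hd hs key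
  rcases mul_eq_zero.1 hprod with hab | rfl
  · rcases mul_eq_zero.1 hab with h2 | rfl
    · exact two_ne_zero h2
    · exact hde (d * b) (by linear_combination d * hsum)
  · exact he a (by linear_combination hsum)

lemma minpoly_eq_X_sq_sub_C {d : F} (hd : ∀ x : F, x ^ 2 ≠ d) {s : K}
    (hs : s ^ 2 = algebraMap F K d) : minpoly F s = X ^ 2 - C d :=
  (minpoly.eq_of_irreducible_of_monic (X_pow_sub_C_irreducible_of_prime Nat.prime_two hd)
    (by simp [hs]) (monic_X_pow_sub_C _ two_ne_zero)).symm

lemma isIntegral_of_sq_eq_algebraMap {d : F} {s : K} (hs : s ^ 2 = algebraMap F K d) :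
    IsIntegral F s :=
  .of_pow two_pos (hs ▸ isIntegral_algebraMap)

lemma finrank_adjoin_simple_of_sq_eq {d : F} (hd : ∀ x : F, x ^ 2 ≠ d) {s : K}
    (hs : s ^ 2 = algebraMap F K d) : Module.finrank F F⟮s⟯ = 2 := by
  rw [adjoin.finrank (isIntegral_of_sq_eq_algebraMap hs), minpoly_eq_X_sq_sub_C hd hs,
    natDegree_X_pow_sub_C]

theorem finrank_adjoin_pair_of_sq_eq [NeZero (2 : F)] {d e : F} (hd : ∀ x : F, x ^ 2 ≠ d)
    (he : ∀ x : F, x ^ 2 ≠ e) (hde : ∀ x : F, x ^ 2 ≠ d * e) {s w : K}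
    (hs : s ^ 2 = algebraMap F K d) (hw : w ^ 2 = algebraMap F K e) :
    Module.finrank F (Algebra.adjoin F {s, w}) = 4 := by
  have hw' : w ^ 2 = algebraMap F⟮s⟯ K (algebraMap F F⟮s⟯ e) := by
    rwa [← IsScalarTower.algebraMap_apply]
  have he' : ∀ y : F⟮s⟯, y ^ 2 ≠ algebraMap F F⟮s⟯ e := by
    intro y hy
    refine sq_ne_algebraMap_of_mem_adjoin hd he hde hs (y := (y : K)) ?_
      (by simpa using congrArg (algebraMap F⟮s⟯ K) hy)
    rw [← adjoin_simple_toSubalgebra_of_isAlgebraic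
      (isIntegral_of_sq_eq_algebraMap hs).isAlgebraic]
    exact y.2
  have hadj : (F⟮s, w⟯).toSubalgebra = Algebra.adjoin F {s, w} := by
    refine adjoin_toSubalgebra_of_isAlgebraic ?_
    rintro x (rfl | rfl)
    exacts [(isIntegral_of_sq_eq_algebraMap hs).isAlgebraic,
      (isIntegral_of_sq_eq_algebraMap hw).isAlgebraic]
  rw [← hadj, finrank_eq_finrank_subalgebra, ← adjoin_simple_adjoin_simple]
  change Module.finrank F F⟮s⟯⟮w⟯ = 4
  rw [← Module.finrank_mul_finrank F F⟮s⟯ F⟮s⟯⟮w⟯, finrank_adjoin_simple_of_sq_eq hd hs,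
    finrank_adjoin_simple_of_sq_eq he' hw']

lemma adjoin_pair_mul_eq {s w z : K} (hs : IsIntegral F s) (hz : z ∈ Algebra.adjoin F {s})
    (hz0 : z ≠ 0) : Algebra.adjoin F {s, w * z} = Algebra.adjoin F {s, w} := by
  have : Algebra.IsIntegral F (Algebra.adjoin F {s}) := Algebra.IsIntegral.adjoin (by simpa)
  have hzinv : z⁻¹ ∈ Algebra.adjoin F {s} := Algebra.IsIntegral.inv_mem hz
  have hle (u : K) : Algebra.adjoin F {s} ≤ Algebra.adjoin F {s, u} :=
    Algebra.adjoin_mono (by simp)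
  apply le_antisymm <;> rw [Algebra.adjoin_le_iff, Set.insert_subset_iff, Set.singleton_subset_iff]
  · exact ⟨Algebra.subset_adjoin (by simp),
      mul_mem (Algebra.subset_adjoin (by simp)) (hle w hz)⟩
  · refine ⟨Algebra.subset_adjoin (by simp), ?_⟩
    have := mul_mem (Algebra.subset_adjoin (by simp) : w * z ∈ Algebra.adjoin F {s, w * z})
      (hle _ hzinv)
    rwa [mul_inv_cancel_right₀ hz0] at this

end Biquadratic

lemma PadicInt.norm_pow_mul_natCast {p : ℕ} [Fact p.Prime] (k : ℕ) {n : ℕ} (hn : p.Coprime n) :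
    ‖(p : ℤ_[p]) ^ k * n‖ = (p : ℝ)⁻¹ ^ k := by
  rw [norm_mul, norm_pow, norm_p, norm_natCast_eq_one_iff.2 hn, mul_one]

lemma Padic.sq_ne_of_odd_valuation {p : ℕ} [Fact p.Prime] {c : ℚ_[p]} (hc : Odd c.valuation)
    (x : ℚ_[p]) : x ^ 2 ≠ c := by
  rintro rfl
  rw [Padic.valuation_pow] at hc
  exact Int.not_even_iff_odd.2 hc (by simp)

lemma Padic.sq_ne_of_toZModPow {p : ℕ} [Fact p.Prime] {c : ℤ_[p]} {n : ℕ}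
    (hc : ∀ y : ZMod (p ^ n), y ^ 2 ≠ PadicInt.toZModPow n c) (x : ℚ_[p]) : x ^ 2 ≠ c := by
  intro hx
  have hx1 : ‖x‖ ≤ 1 := by
    rw [← pow_le_one_iff_of_nonneg (norm_nonneg x) two_ne_zero, ← norm_pow, hx]
    exact c.norm_le_one
  set y : ℤ_[p] := ⟨x, hx1⟩
  have hy : y ^ 2 = c := Subtype.ext (by simpa using hx)
  exact hc (PadicInt.toZModPow n y) (by rw [← map_pow, hy])

lemma Padic.exists_four_mul_pow_four_add_fifteen_mul_sq_add_five_eq_zero :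
    ∃ a : ℚ_[2], 4 * a ^ 4 + 15 * a ^ 2 + 5 = 0 := by
  set f : ℤ_[2][X] := 4 * X ^ 4 + 15 * X ^ 2 + 5
  have hf : f.aeval (1 : ℤ_[2]) = ((2 : ℕ) : ℤ_[2]) ^ 3 * (3 : ℕ) := by norm_num [f]
  have hf' : (derivative f).aeval (1 : ℤ_[2]) = ((2 : ℕ) : ℤ_[2]) ^ 1 * (23 : ℕ) := by
    norm_num [f, derivative_mul]
  have hnorm : ‖f.aeval (1 : ℤ_[2])‖ < ‖(derivative f).aeval (1 : ℤ_[2])‖ ^ 2 := by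
    rw [hf, hf', PadicInt.norm_pow_mul_natCast _ (by norm_num),
      PadicInt.norm_pow_mul_natCast _ (by norm_num)]
    norm_num
  obtain ⟨a, ha, -⟩ := hensels_lemma hnorm
  replace ha := congrArg PadicInt.Coe.ringHom ha
  simp only [f, map_add, map_mul, map_pow, map_ofNat, aeval_X, map_zero] at ha
  exact ⟨_, ha⟩

lemma exists_mem_adjoin_sq_eq_neg_fifteen_add_four_mul {K : Type*} [Field K] [Algebra ℚ_[2] K]
    {s : K} (hs : s ^ 2 = 5) : ∃ z ∈ Algebra.adjoin ℚ_[2] {s}, z ^ 2 = -15 + 4 * s := by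
  obtain ⟨a, ha⟩ := Padic.exists_four_mul_pow_four_add_fifteen_mul_sq_add_five_eq_zero
  have ha0 : a ≠ 0 := by rintro rfl; norm_num at ha
  have hb : 4 * algebraMap ℚ_[2] K a ^ 4 + 15 * algebraMap ℚ_[2] K a ^ 2 + 5 = 0 := by
    have := congrArg (algebraMap ℚ_[2] K) ha
    simp only [map_add, map_mul, map_pow, map_ofNat, map_zero] at this
    exact this
  have hb0 : algebraMap ℚ_[2] K a ≠ 0 := (_root_.map_ne_zero _).2 ha0
  refine ⟨algebraMap ℚ_[2] K (2 * a) + algebraMap ℚ_[2] K a⁻¹ * s,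
    add_mem (Subalgebra.algebraMap_mem _ _)
      (mul_mem (Subalgebra.algebraMap_mem _ _) (Algebra.self_mem_adjoin_singleton _ _)), ?_⟩
  rw [map_mul, map_inv₀, map_ofNat]
  field_simp
  linear_combination hb + hs

/-- In `ℚ₂(√5)` the element `-15 + 4√5` is a square; consequently, adjoining a square root
`t` of `-30 + 8√5` gives `ℚ₂(√5, √2)`, which is a biquadratic (degree 4) extension of
`ℚ₂`. -/
theorem stmt9 (K : Type*) [Field K] [Algebra ℚ_[2] K] (s : K) (hs : s ^ 2 = 5) :
    (∃ z : K, z ^ 2 = -15 + 4 * s) ∧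
    (∀ t : K, t ^ 2 = -30 + 8 * s →
      ∃ w : K, w ^ 2 = 2 ∧
        Algebra.adjoin ℚ_[2] ({s, t} : Set K) = Algebra.adjoin ℚ_[2] ({s, w} : Set K) ∧
        Module.finrank ℚ_[2] (Algebra.adjoin ℚ_[2] ({s, t} : Set K)) = 4) := by
  have h5 (x : ℚ_[2]) : x ^ 2 ≠ 5 := by
    exact_mod_cast Padic.sq_ne_of_toZModPow (c := 5) (n := 3) (by rw [map_ofNat]; decide) x
  have h2 (x : ℚ_[2]) : x ^ 2 ≠ 2 := Padic.sq_ne_of_odd_valuation (by simp) x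
  have h10 (x : ℚ_[2]) : x ^ 2 ≠ 5 * 2 :=
    Padic.sq_ne_of_odd_valuation (by simp [Padic.valuation_mul, padicValNat.eq_zero_of_not_dvd]) x
  have hs' : s ^ 2 = algebraMap ℚ_[2] K 5 := by rwa [map_ofNat]
  obtain ⟨z, hz_mem, hz⟩ := exists_mem_adjoin_sq_eq_neg_fifteen_add_four_mul hs
  have hz0 : z ≠ 0 := by
    rintro rfl
    have h4 := (eq_zero_and_eq_zero_of_algebraMap_add_mul_eq_zero h5 hs' (u := -15) (v := 4)
      (by simp only [map_neg, map_ofNat]; linear_combination -hz)).2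
    norm_num at h4
  refine ⟨⟨z, hz⟩, fun t ht => ?_⟩
  have hw : (t / z) ^ 2 = 2 := by
    rw [div_pow, div_eq_iff (pow_ne_zero 2 hz0), ht, hz]
    ring
  have hadj := adjoin_pair_mul_eq (w := t / z) (isIntegral_of_sq_eq_algebraMap hs') hz_mem hz0
  rw [div_mul_cancel₀ t hz0] at hadj
  refine ⟨t / z, hw, hadj, ?_⟩
  rw [hadj]
  exact finrank_adjoin_pair_of_sq_eq h5 h2 h10 hs' (by rwa [map_ofNat])
end

section
/- Let d₁, d₂ be squarefree negative integers with d₁ ≡ d₂ ≡ -1 (mod 4), let K = Q(√d₁) ⊕ Q(√d₂), and let Λ ⊆ Z[√d₁] ⊕ Z[√d₂] be the subring of pairs (x₁, x₂) with x₁ mod 2 and x₂ mod 2 matching under the isomorphisms Z[√dᵢ]/2 ≅ F₂[x]/(x²) sending 1+√dᵢ to x. Then the dual lattice D_K(Λ) = {α ∈ K : Tr_{K/Q}(αz) ∈ Z for all z ∈ Λ} equals the Z-span of (1/2, 0), (1/4, -1/4), (1/(2√d₁), 0), and (1/(4√d₁), -1/(4√d₂)). -/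
/-- Let `d₁, d₂` be squarefree negative integers, `≡ -1 mod 4`.  Model the étale algebra
`K = ℚ(√d₁) ⊕ ℚ(√d₂)` as pairs of coordinate pairs `(a, b) ↔ a + b√dᵢ`, with the trace
pairing `T(α, z) = Tr_{K/ℚ}(αz)`.  Let `Λ` be the lattice spanned by `(2,0)`, `(1,1)`,
`(2√d₁, 0)`, `(√d₁, √d₂)`.  Then the dual lattice `{α : Tr(αΛ) ⊆ ℤ}` is spanned by
`(1/2, 0)`, `(1/4, -1/4)`, `(1/(2√d₁), 0)` and `(1/(4√d₁), -1/(4√d₂))`. -/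
theorem stmt15 (d₁ d₂ : ℤ) (h1 : d₁ < 0) (h2 : d₂ < 0)
    (hsf1 : Squarefree d₁) (hsf2 : Squarefree d₂)
    (hm1 : d₁ % 4 = 3) (hm2 : d₂ % 4 = 3) :
    let K := (ℚ × ℚ) × (ℚ × ℚ)
    let T : K → K → ℚ := fun α z =>
      2 * (α.1.1 * z.1.1 + (d₁ : ℚ) * α.1.2 * z.1.2) +
      2 * (α.2.1 * z.2.1 + (d₂ : ℚ) * α.2.2 * z.2.2)
    let Λ : Submodule ℤ K := Submodule.span ℤ
      {((2, 0), (0, 0)), ((1, 0), (1, 0)), ((0, 2), (0, 0)), ((0, 1), (0, 1))}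
    {α : K | ∀ z ∈ Λ, ∃ c : ℤ, T α z = (c : ℚ)} =
      (Submodule.span ℤ
        ({((1/2, 0), (0, 0)), ((1/4, 0), (-(1/4), 0)),
          ((0, 1/(2 * (d₁ : ℚ))), (0, 0)),
          ((0, 1/(4 * (d₁ : ℚ))), (0, -(1/(4 * (d₂ : ℚ)))))} : Set K) : Set K) := by
  intro K T Λ
  unfold Λ T K
  have hd1 : (d₁ : ℚ) ≠ 0 := by exact_mod_cast h1.ne
  have hd2 : (d₂ : ℚ) ≠ 0 := by exact_mod_cast h2.ne
  ext α
  obtain ⟨⟨a, b⟩, c, e⟩ := α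
  simp only [Set.mem_setOf_eq, SetLike.mem_coe]
  constructor
  · intro h
    obtain ⟨c1, hc1⟩ := h ((2, 0), (0, 0)) (Submodule.subset_span (by simp))
    obtain ⟨c2, hc2⟩ := h ((1, 0), (1, 0)) (Submodule.subset_span (by simp))
    obtain ⟨c3, hc3⟩ := h ((0, 2), (0, 0)) (Submodule.subset_span (by simp))
    obtain ⟨c4, hc4⟩ := h ((0, 1), (0, 1)) (Submodule.subset_span (by simp))
    simp only [T] at hc1 hc2 hc3 hc4
    norm_num at hc1 hc2 hc3 hc4
    have key : (((a, b), c, e) : K)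
        = c2 • (((1/2, 0), (0, 0)) : K) + (c1 - 2*c2) • (((1/4, 0), (-(1/4), 0)) : K)
          + c4 • (((0, 1/(2 * (d₁ : ℚ))), (0, 0)) : K)
          + (c3 - 2*c4) • (((0, 1/(4 * (d₁ : ℚ))), (0, -(1/(4 * (d₂ : ℚ))))) : K) := by
      simp only [Prod.smul_mk, Prod.mk_add_mk, Prod.mk.injEq, zsmul_eq_mul]
      push_cast
      refine ⟨⟨?_, ?_⟩, ?_, ?_⟩
      · linear_combination hc1 / 4
      · have hb : b = (c3 : ℚ) / (4 * (d₁ : ℚ)) := by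
          rw [eq_div_iff (by simp [hd1])]
          linear_combination hc3
        rw [hb]; field_simp; try ring
      · linear_combination hc2 / 2 - hc1 / 4
      · have he : e = (2 * (c4:ℚ) - (c3:ℚ)) / (4 * (d₂ : ℚ)) := by
          rw [eq_div_iff (by simp [hd2])]
          linear_combination 2 * hc4 - hc3
        rw [he]; field_simp; try ring
    rw [key]
    refine Submodule.add_mem _ (Submodule.add_mem _ (Submodule.add_mem _ ?_ ?_) ?_) ?_ <;>
      exact Submodule.smul_mem _ _ (Submodule.subset_span (by simp))
  · intro h z hz
    obtain ⟨⟨z1, z2⟩, z3, z4⟩ := z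
    simp only [Λ, Submodule.mem_span_insert, Submodule.mem_span_singleton] at h hz
    obtain ⟨x, _, ⟨y, _, ⟨u, _, ⟨w, rfl⟩, rfl⟩, rfl⟩, hα⟩ := h
    obtain ⟨m1, _, ⟨m2, _, ⟨m3, _, ⟨m4, rfl⟩, rfl⟩, rfl⟩, hz'⟩ := hz
    simp only [Prod.smul_mk, Prod.mk_add_mk, Prod.mk.injEq] at hα hz'
    simp only [zsmul_eq_mul] at hα hz'
    obtain ⟨⟨ha, hb⟩, hc, he⟩ := hα
    obtain ⟨⟨hz1, hz2⟩, hz3, hz4⟩ := hz'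
    subst ha hb hc he hz1 hz2 hz3 hz4
    refine ⟨m1 * (2*x + y) + m2 * x + m3 * (2*u + w) + m4 * u, ?_⟩
    simp only [T]
    push_cast
    field_simp
    ring
end

section
/- Let V be a finite-dimensional complex vector space with dim_C V ≥ 3, equipped with a positive-definite Hermitian form H, and let su(V, H) be the special unitary Lie algebra. Then the centralizer of su(V, H) in the algebra End_R(V) of R-linear endomorphisms of V is C·Id_V, the complex scalar operators. -/
/-!
For `e ⊥ f` with `‖f‖ = 1` and `z : ℂ`, the operator `x ↦ z ⟪f, x⟫ e - z̄ ⟪e, x⟫ f` lies in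
`su(V, H)` and sends `f` to `z e`, so commuting with it gives
`u (z e) = z ⟪f, u f⟫ e - z̄ ⟪e, u f⟫ f`. Since `dim V ≥ 3` there is a unit vector orthogonal to
both `e` and `f`, and the same identity for that vector shows `⟪e, u f⟫ = 0`. Hence `u` is
multiplication by `⟪f, u f⟫` on `fᗮ`, and comparing two orthogonal unit vectors shows that it is
the same scalar on the line `ℂ f`.
-/

open scoped ComplexConjugate InnerProductSpace

theorem exists_norm_eq_one_inner_eq_zero_pair {𝕜 E : Type*} [RCLike 𝕜] [NormedAddCommGroup E]
    [InnerProductSpace 𝕜 E] [FiniteDimensional 𝕜 E] (h3 : 3 ≤ Module.finrank 𝕜 E) (e f : E) :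
    ∃ g : E, ‖g‖ = 1 ∧ ⟪e, g⟫_𝕜 = 0 ∧ ⟪f, g⟫_𝕜 = 0 := by
  classical
  set K := Submodule.span 𝕜 (({e, f} : Finset E) : Set E)
  have hK : Module.finrank 𝕜 K ≤ 2 :=
    (finrank_span_finset_le_card _).trans Finset.card_le_two
  have hKperp : Kᗮ ≠ ⊥ := by
    intro h
    have := K.finrank_add_finrank_orthogonal
    rw [h, finrank_bot] at this
    omega
  obtain ⟨g, hgK, hg⟩ := Submodule.exists_mem_ne_zero_of_ne_bot hKperp
  refine ⟨(‖g‖⁻¹ : 𝕜) • g, norm_smul_inv_norm hg, ?_, ?_⟩ <;>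
    refine K.inner_right_of_mem_orthogonal ?_ (Kᗮ.smul_mem _ hgK) <;>
    exact Submodule.subset_span (by simp)

section SpecialUnitary

variable {V : Type*} [NormedAddCommGroup V] [InnerProductSpace ℂ V]

variable (V) in
def specialUnitaryLieAlgebra : Set (V →ₗ[ℂ] V) :=
  {A | (∀ x y : V, ⟪A x, y⟫_ℂ + ⟪x, A y⟫_ℂ = 0) ∧ LinearMap.trace ℂ V A = 0}

noncomputable def skewRankTwo (z : ℂ) (e f : V) : V →ₗ[ℂ] V :=
  z • (innerₛₗ ℂ f).smulRight e - conj z • (innerₛₗ ℂ e).smulRight f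

theorem skewRankTwo_apply (z : ℂ) (e f x : V) :
    skewRankTwo z e f x = (z * ⟪f, x⟫_ℂ) • e - (conj z * ⟪e, x⟫_ℂ) • f := by
  simp [skewRankTwo, mul_smul]

theorem skewRankTwo_mem_specialUnitaryLieAlgebra [FiniteDimensional ℂ V] (z : ℂ) {e f : V}
    (hef : ⟪e, f⟫_ℂ = 0) : skewRankTwo z e f ∈ specialUnitaryLieAlgebra V := by
  refine ⟨fun x y => ?_, ?_⟩
  · simp only [skewRankTwo_apply, inner_sub_left, inner_sub_right, inner_smul_left,
      inner_smul_right, inner_conj_symm, map_mul, Complex.conj_conj]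
    ring
  · simp [skewRankTwo, inner_eq_zero_symm.mp hef, hef]

theorem apply_smul_eq_of_inner_eq_zero [FiniteDimensional ℂ V] {u : V →ₗ[ℝ] V}
    (hu : ∀ A ∈ specialUnitaryLieAlgebra V, ∀ x, u (A x) = A (u x)) {e f : V}
    (hef : ⟪e, f⟫_ℂ = 0) (hf : ‖f‖ = 1) (z : ℂ) :
    u (z • e) = (z * ⟪f, u f⟫_ℂ) • e - (conj z * ⟪e, u f⟫_ℂ) • f := by
  have hA : skewRankTwo z e f f = z • e := by
    simp [skewRankTwo_apply, hef, inner_self_eq_norm_sq_to_K, hf]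
  rw [← hA, hu _ (skewRankTwo_mem_specialUnitaryLieAlgebra z hef), skewRankTwo_apply]

theorem inner_apply_eq_zero_of_orthogonal [FiniteDimensional ℂ V] {u : V →ₗ[ℝ] V}
    (hu : ∀ A ∈ specialUnitaryLieAlgebra V, ∀ x, u (A x) = A (u x)) {e f g : V}
    (hef : ⟪e, f⟫_ℂ = 0) (heg : ⟪e, g⟫_ℂ = 0) (hfg : ⟪f, g⟫_ℂ = 0) (hg : ‖g‖ = 1) :
    ⟪e, u f⟫_ℂ = 0 := by
  have h := apply_smul_eq_of_inner_eq_zero hu hfg hg 1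
  rw [one_smul] at h
  simp [h, hef, heg]

theorem apply_smul_eq_of_three_le_finrank [FiniteDimensional ℂ V] {u : V →ₗ[ℝ] V}
    (hu : ∀ A ∈ specialUnitaryLieAlgebra V, ∀ x, u (A x) = A (u x))
    (h3 : 3 ≤ Module.finrank ℂ V) {e f : V} (hef : ⟪e, f⟫_ℂ = 0) (hf : ‖f‖ = 1) (z : ℂ) :
    u (z • e) = (z * ⟪f, u f⟫_ℂ) • e := by
  obtain ⟨g, hg, heg, hfg⟩ := exists_norm_eq_one_inner_eq_zero_pair h3 e f
  simp [apply_smul_eq_of_inner_eq_zero hu hef hf,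
    inner_apply_eq_zero_of_orthogonal hu hef heg hfg hg]

end SpecialUnitary

/-- Let `V` be a complex vector space of dimension at least 3 with a positive definite
Hermitian form (an inner product). Then any `ℝ`-linear endomorphism of `V` commuting
with every element of the special unitary Lie algebra `su(V,H)` is a complex scalar. -/
theorem stmt19 (V : Type*) [NormedAddCommGroup V] [InnerProductSpace ℂ V]
    [FiniteDimensional ℂ V] (h3 : 3 ≤ Module.finrank ℂ V)
    (u : V →ₗ[ℝ] V)
    (hu : ∀ A : V →ₗ[ℂ] V,
      (∀ x y : V, (inner ℂ (A x) y : ℂ) + (inner ℂ x (A y) : ℂ) = 0) →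
      LinearMap.trace ℂ V A = 0 → ∀ x, u (A x) = A (u x)) :
    ∃ c : ℂ, ∀ x, u x = c • x := by
  have hsu : ∀ A ∈ specialUnitaryLieAlgebra V, ∀ x, u (A x) = A (u x) :=
    fun A hA => hu A hA.1 hA.2
  obtain ⟨f, hf, -, -⟩ := exists_norm_eq_one_inner_eq_zero_pair h3 (0 : V) 0
  obtain ⟨g, hg, hfg, -⟩ := exists_norm_eq_one_inner_eq_zero_pair h3 f f
  set c := ⟪f, u f⟫_ℂ
  have h_perp : ∀ x, ⟪x, f⟫_ℂ = 0 → u x = c • x := fun x hx => by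
    simpa using apply_smul_eq_of_three_le_finrank hsu h3 hx hf 1
  have hgc : ⟪g, u g⟫_ℂ = c := by
    simp [h_perp g (inner_eq_zero_symm.mp hfg), inner_self_eq_norm_sq_to_K, hg]
  have h_line : ∀ w : ℂ, u (w • f) = c • w • f := fun w => by
    rw [apply_smul_eq_of_three_le_finrank hsu h3 hfg hg, hgc, mul_comm, mul_smul]
  refine ⟨c, fun x => ?_⟩
  have hx : ⟪x - ⟪f, x⟫_ℂ • f, f⟫_ℂ = 0 := by
    simp [inner_self_eq_norm_sq_to_K, hf]
  calc u x = u (⟪f, x⟫_ℂ • f) + u (x - ⟪f, x⟫_ℂ • f) := by rw [← map_add, add_sub_cancel]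
    _ = c • x := by rw [h_line, h_perp _ hx, ← smul_add, add_sub_cancel]
end
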